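/- Polynomial ring extension: Let R be a commutative ring with a biderivation b. Then b extends to a biderivation on the polynomial ring R[X]. Moreover, given any pair of derivations D : R → R[X] and E : R[X] → R[X] (additive maps satisfying the Leibniz rule, with R[X] regarded as an R-module via the constants embedding C : R → R[X]), there is a unique biderivation b' on R[X] satisfying: b'(C(r), C(s)) = C(b(r,s)) for all r, s ∈ R; b'(C(r), X) = D(r) for all r ∈ R; and b'(X, p) = E(p) for all p ∈ R[X]. -/

import Mathlib

/-- An `M`-valued derivation on a commutative ring `T`. -/
def IsDerivationFun {T M : Type*} [CommRing T] [AddCommGroup M] [Module T M]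
    (d : T → M) : Prop :=
  (∀ x y : T, d (x + y) = d x + d y) ∧ (∀ x y : T, d (x * y) = x • d y + y • d x)

/-- A biderivation on a commutative ring `R`: a map `R → R → R` that is a derivation in
each argument. -/
def IsBiderivO {R : Type*} [CommRing R] (b : R → R → R) : Prop :=
  (∀ r : R, IsDerivationFun (b r)) ∧ (∀ s : R, IsDerivationFun (fun r => b r s))

section Aux

open Polynomial TrivSqZeroExt

variable {R : Type*} [CommRing R]

lemma isDer_zero_map {T M : Type*} [CommRing T] [AddCommGroup M] [Module T M]
    {d : T → M} (hd : IsDerivationFun d) : d 0 = 0 := by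
  have := hd.1 0 0; simpa using this.symm

lemma isDer_one_map {T M : Type*} [CommRing T] [AddCommGroup M] [Module T M]
    {d : T → M} (hd : IsDerivationFun d) : d 1 = 0 := by
  have := hd.2 1 1
  simp only [mul_one, one_smul] at this
  have h2 : d 1 + d 1 = d 1 + 0 := by rw [← this, add_zero]
  exact add_left_cancel h2

/-- The ring hom `R → TrivSqZeroExt R[X] R[X]` attached to a derivation `d : R → R[X]`. -/
noncomputable def derHom (d : R → Polynomial R) (hd : IsDerivationFun d) :
    R →+* TrivSqZeroExt (Polynomial R) (Polynomial R) where
  toFun r := (C r, d r)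
  map_one' := TrivSqZeroExt.ext (by simp) (by simpa using isDer_one_map hd)
  map_mul' x y := TrivSqZeroExt.ext (by erw [fst_mul]; simp)
    (by
      erw [snd_mul]; simp only [fst_mk, snd_mk]
      rw [hd.2 x y]
      simp only [op_smul_eq_smul, smul_eq_mul, Polynomial.smul_eq_C_mul]
      try ring)
  map_zero' := TrivSqZeroExt.ext (by simp) (by simpa using isDer_zero_map hd)
  map_add' x y := TrivSqZeroExt.ext (by erw [fst_add]; simp) (by erw [snd_add]; simp [hd.1 x y])

@[simp] lemma derHom_fst (d : R → Polynomial R) (hd : IsDerivationFun d) (r : R) :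
    fst (derHom d hd r) = C r := rfl

@[simp] lemma derHom_snd (d : R → Polynomial R) (hd : IsDerivationFun d) (r : R) :
    snd (derHom d hd r) = d r := rfl

/-- Extension of a derivation `d : R → R[X]` to a derivation `R[X] → R[X]` sending `X` to
`m`. -/
noncomputable def extDer (d : R → Polynomial R) (hd : IsDerivationFun d) (m : Polynomial R) :
    Polynomial R → Polynomial R :=
  fun p => snd (eval₂ (derHom d hd) ((X, m) : TrivSqZeroExt (Polynomial R) (Polynomial R)) p)

lemma extDer_fst (d : R → Polynomial R) (hd : IsDerivationFun d) (m : Polynomial R)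
    (p : Polynomial R) :
    fst (eval₂ (derHom d hd) ((X, m) : TrivSqZeroExt (Polynomial R) (Polynomial R)) p) = p := by
  induction p using Polynomial.induction_on with
  | C a => erw [eval₂_C]; rfl
  | add p q hp hq => erw [eval₂_add, fst_add, hp, hq]
  | monomial n a ih =>
      have e : (C a : Polynomial R) * X ^ (n + 1) = (C a * X ^ n) * X := by ring
      erw [e, eval₂_mul, fst_mul, ih, eval₂_X]
      rfl

@[simp] lemma extDer_C (d : R → Polynomial R) (hd : IsDerivationFun d) (m : Polynomial R)
    (r : R) : extDer d hd m (C r) = d r := by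
  unfold extDer; erw [eval₂_C]; rfl

@[simp] lemma extDer_X (d : R → Polynomial R) (hd : IsDerivationFun d) (m : Polynomial R) :
    extDer d hd m X = m := by
  unfold extDer; erw [eval₂_X]; rfl

lemma extDer_add (d : R → Polynomial R) (hd : IsDerivationFun d) (m : Polynomial R)
    (p q : Polynomial R) : extDer d hd m (p + q) = extDer d hd m p + extDer d hd m q := by
  unfold extDer; erw [eval₂_add, snd_add]

lemma extDer_mul (d : R → Polynomial R) (hd : IsDerivationFun d) (m : Polynomial R)
    (p q : Polynomial R) :
    extDer d hd m (p * q) = p * extDer d hd m q + q * extDer d hd m p := by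
  unfold extDer
  erw [eval₂_mul, snd_mul, extDer_fst, extDer_fst, op_smul_eq_smul, smul_eq_mul, smul_eq_mul]

lemma extDer_isDer (d : R → Polynomial R) (hd : IsDerivationFun d) (m : Polynomial R) :
    IsDerivationFun (extDer d hd m) :=
  ⟨extDer_add d hd m, fun p q => by rw [extDer_mul d hd m p q, smul_eq_mul, smul_eq_mul]⟩

/-- `extDer` is linear in the pair `(d, m)` over `R[X]`. -/
lemma extDer_lin (c e : Polynomial R)
    (d₁ d₂ d : R → Polynomial R) (hd₁ : IsDerivationFun d₁) (hd₂ : IsDerivationFun d₂)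
    (hd : IsDerivationFun d) (m₁ m₂ m : Polynomial R)
    (hdc : ∀ r, d r = c * d₁ r + e * d₂ r) (hm : m = c * m₁ + e * m₂) (p : Polynomial R) :
    extDer d hd m p = c * extDer d₁ hd₁ m₁ p + e * extDer d₂ hd₂ m₂ p := by
  induction p using Polynomial.induction_on with
  | C a => simp [hdc a]
  | add p q hp hq =>
      rw [extDer_add, extDer_add, extDer_add, hp, hq]; ring
  | monomial n a ih =>
      have hstep : ∀ (d' : R → Polynomial R) (hd' : IsDerivationFun d') (m' : Polynomial R),
          extDer d' hd' m' (C a * X ^ (n + 1)) =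
            (C a * X ^ n) * m' + X * extDer d' hd' m' (C a * X ^ n) := by
        intro d' hd' m'
        have e2 : (C a : Polynomial R) * X ^ (n + 1) = (C a * X ^ n) * X := by ring
        rw [e2, extDer_mul, extDer_X]
      rw [hstep _ hd m, hstep _ hd₁ m₁, hstep _ hd₂ m₂, ih, hm]; ring

/-- Two derivations `R[X] → R[X]` agreeing on constants and on `X` are equal. -/
lemma der_unique (d₁ d₂ : Polynomial R → Polynomial R)
    (h₁ : IsDerivationFun d₁) (h₂ : IsDerivationFun d₂)
    (hC : ∀ r : R, d₁ (C r) = d₂ (C r)) (hX : d₁ X = d₂ X) (p : Polynomial R) :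
    d₁ p = d₂ p := by
  induction p using Polynomial.induction_on with
  | C a => exact hC a
  | add p q hp hq => rw [h₁.1, h₂.1, hp, hq]
  | monomial n a ih =>
      have e : (C a : Polynomial R) * X ^ (n + 1) = (C a * X ^ n) * X := by ring
      rw [e, h₁.2, h₂.2, ih, hX]

lemma hbeta (b : R → R → R) (hb : IsBiderivO b) (s : R) : IsDerivationFun (fun r : R => (C (b r s) : Polynomial R)) := by
  constructor
  · intro x y
    have h : b (x + y) s = b x s + b y s := (hb.2 s).1 x y
    show (C (b (x + y) s) : Polynomial R) = C (b x s) + C (b y s)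
    rw [h, map_add]
  · intro x y
    have h : b (x * y) s = x • b y s + y • b x s := (hb.2 s).2 x y
    show (C (b (x * y) s) : Polynomial R) = x • C (b y s) + y • C (b x s)
    rw [h]
    simp [Polynomial.smul_eq_C_mul, smul_eq_mul, map_add]

/-- First-slot extension with second argument the constant `s`. -/
noncomputable def betaF (b : R → R → R) (hb : IsBiderivO b) (E : Polynomial R → Polynomial R) : Polynomial R → R → Polynomial R :=
  fun p s => extDer (fun r => C (b r s)) (hbeta b hb s) (E (C s)) p

lemma betaF_isDer_snd (b : R → R → R) (hb : IsBiderivO b) (E : Polynomial R → Polynomial R)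
    (hE : IsDerivationFun E) (p : Polynomial R) : IsDerivationFun (fun s => betaF b hb E p s) := by
  constructor
  · intro x y
    have hdc : ∀ r : R, (C (b r (x + y)) : Polynomial R) = 1 * C (b r x) + 1 * C (b r y) := by
      intro r
      have h : b r (x + y) = b r x + b r y := (hb.1 r).1 x y
      rw [h, map_add]; ring
    have hm : E (C (x + y)) = 1 * E (C x) + 1 * E (C y) := by
      rw [map_add, hE.1]; ring
    have key := extDer_lin 1 1 (fun r => C (b r x)) (fun r => C (b r y))
      (fun r => C (b r (x + y))) (hbeta b hb x) (hbeta b hb y) (hbeta b hb (x + y))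
      (E (C x)) (E (C y)) (E (C (x + y))) hdc hm p
    show betaF b hb E p (x + y) = betaF b hb E p x + betaF b hb E p y
    unfold betaF
    simpa using key
  · intro x y
    have hdc : ∀ r : R, (C (b r (x * y)) : Polynomial R)
        = C x * C (b r y) + C y * C (b r x) := by
      intro r
      have h : b r (x * y) = x • b r y + y • b r x := (hb.1 r).2 x y
      rw [h]
      simp [smul_eq_mul, map_add]
    have hm : E (C (x * y)) = C x * E (C y) + C y * E (C x) := by
      have h := hE.2 (C x) (C y)
      have hcc : (C (x * y) : Polynomial R) = C x * C y := map_mul C x y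
      rw [hcc, h]
      simp [smul_eq_mul]
    have key := extDer_lin (C x) (C y) (fun r => C (b r y)) (fun r => C (b r x))
      (fun r => C (b r (x * y))) (hbeta b hb y) (hbeta b hb x) (hbeta b hb (x * y))
      (E (C y)) (E (C x)) (E (C (x * y))) hdc hm p
    show betaF b hb E p (x * y) = x • betaF b hb E p y + y • betaF b hb E p x
    unfold betaF
    simpa [Polynomial.smul_eq_C_mul] using key

/-- First-slot extension with second argument `X`. -/
noncomputable def epsF (E : Polynomial R → Polynomial R) (D : R → Polynomial R)
    (hD : IsDerivationFun D) : Polynomial R → Polynomial R := extDer D hD (E X)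

/-- The biderivation on `R[X]` extending `b`, `D`, `E`. -/
noncomputable def bidF (b : R → R → R) (hb : IsBiderivO b) (E : Polynomial R → Polynomial R)
    (hE : IsDerivationFun E) (D : R → Polynomial R) (hD : IsDerivationFun D) : Polynomial R → Polynomial R → Polynomial R :=
  fun p => extDer (fun s => betaF b hb E p s) (betaF_isDer_snd b hb E hE p) (epsF E D hD p)

lemma betaF_C (b : R → R → R) (hb : IsBiderivO b) (E : Polynomial R → Polynomial R) (r s : R) : betaF b hb E (C r) s = C (b r s) := by
  unfold betaF; rw [extDer_C]

lemma betaF_X (b : R → R → R) (hb : IsBiderivO b) (E : Polynomial R → Polynomial R) (s : R) : betaF b hb E X s = E (C s) := by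
  unfold betaF; rw [extDer_X]

lemma betaF_add (b : R → R → R) (hb : IsBiderivO b) (E : Polynomial R → Polynomial R) (p q : Polynomial R) (s : R) :
    betaF b hb E (p + q) s = betaF b hb E p s + betaF b hb E q s := by
  unfold betaF; rw [extDer_add]

lemma betaF_mul (b : R → R → R) (hb : IsBiderivO b) (E : Polynomial R → Polynomial R) (p q : Polynomial R) (s : R) :
    betaF b hb E (p * q) s = p * betaF b hb E q s + q * betaF b hb E p s := by
  unfold betaF; rw [extDer_mul]

lemma epsF_C (E : Polynomial R → Polynomial R) (D : R → Polynomial R) (hD : IsDerivationFun D) (r : R) : epsF E D hD (C r) = D r := by unfold epsF; rw [extDer_C]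

lemma epsF_X (E : Polynomial R → Polynomial R) (D : R → Polynomial R) (hD : IsDerivationFun D) : epsF E D hD X = E X := by unfold epsF; rw [extDer_X]

lemma epsF_add (E : Polynomial R → Polynomial R) (D : R → Polynomial R) (hD : IsDerivationFun D) (p q : Polynomial R) : epsF E D hD (p + q) = epsF E D hD p + epsF E D hD q := by
  unfold epsF; rw [extDer_add]

lemma epsF_mul (E : Polynomial R → Polynomial R) (D : R → Polynomial R) (hD : IsDerivationFun D) (p q : Polynomial R) :
    epsF E D hD (p * q) = p * epsF E D hD q + q * epsF E D hD p := by
  unfold epsF; rw [extDer_mul]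

lemma bidF_isBider (b : R → R → R) (hb : IsBiderivO b) (E : Polynomial R → Polynomial R)
    (hE : IsDerivationFun E) (D : R → Polynomial R) (hD : IsDerivationFun D) : IsBiderivO (bidF b hb E hE D hD) := by
  constructor
  · intro p; exact extDer_isDer _ _ _
  · intro q
    constructor
    · intro p₁ p₂
      have hdc : ∀ s : R, betaF b hb E (p₁ + p₂) s
          = 1 * betaF b hb E p₁ s + 1 * betaF b hb E p₂ s := by
        intro s; rw [betaF_add]; ring
      have hm : epsF E D hD (p₁ + p₂) = 1 * epsF E D hD p₁ + 1 * epsF E D hD p₂ := by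
        rw [epsF_add]; ring
      have key := extDer_lin 1 1 (fun s => betaF b hb E p₁ s) (fun s => betaF b hb E p₂ s)
        (fun s => betaF b hb E (p₁ + p₂) s)
        (betaF_isDer_snd b hb E hE p₁) (betaF_isDer_snd b hb E hE p₂)
        (betaF_isDer_snd b hb E hE (p₁ + p₂))
        (epsF E D hD p₁) (epsF E D hD p₂) (epsF E D hD (p₁ + p₂)) hdc hm q
      show bidF b hb E hE D hD (p₁ + p₂) q
        = bidF b hb E hE D hD p₁ q + bidF b hb E hE D hD p₂ q
      unfold bidF
      simpa using key
    · intro p₁ p₂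
      have hdc : ∀ s : R, betaF b hb E (p₁ * p₂) s
          = p₁ * betaF b hb E p₂ s + p₂ * betaF b hb E p₁ s := fun s => betaF_mul b hb E p₁ p₂ s
      have hm : epsF E D hD (p₁ * p₂) = p₁ * epsF E D hD p₂ + p₂ * epsF E D hD p₁ :=
        epsF_mul E D hD p₁ p₂
      have key := extDer_lin p₁ p₂ (fun s => betaF b hb E p₂ s) (fun s => betaF b hb E p₁ s)
        (fun s => betaF b hb E (p₁ * p₂) s)
        (betaF_isDer_snd b hb E hE p₂) (betaF_isDer_snd b hb E hE p₁)
        (betaF_isDer_snd b hb E hE (p₁ * p₂))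
        (epsF E D hD p₂) (epsF E D hD p₁) (epsF E D hD (p₁ * p₂)) hdc hm q
      show bidF b hb E hE D hD (p₁ * p₂) q
        = p₁ • bidF b hb E hE D hD p₂ q + p₂ • bidF b hb E hE D hD p₁ q
      unfold bidF
      simpa [smul_eq_mul] using key

lemma bidF_CC (b : R → R → R) (hb : IsBiderivO b) (E : Polynomial R → Polynomial R)
    (hE : IsDerivationFun E) (D : R → Polynomial R) (hD : IsDerivationFun D) (r s : R) : bidF b hb E hE D hD (C r) (C s) = C (b r s) := by
  unfold bidF
  rw [extDer_C]
  exact betaF_C b hb E r s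

lemma bidF_CX (b : R → R → R) (hb : IsBiderivO b) (E : Polynomial R → Polynomial R)
    (hE : IsDerivationFun E) (D : R → Polynomial R) (hD : IsDerivationFun D) (r : R) : bidF b hb E hE D hD (C r) X = D r := by
  unfold bidF
  rw [extDer_X]
  exact epsF_C E D hD r

lemma bidF_X (b : R → R → R) (hb : IsBiderivO b) (E : Polynomial R → Polynomial R)
    (hE : IsDerivationFun E) (D : R → Polynomial R) (hD : IsDerivationFun D) (p : Polynomial R) : bidF b hb E hE D hD X p = E p := by
  refine der_unique (bidF b hb E hE D hD X) E ((bidF_isBider b hb E hE D hD).1 X) hE ?_ ?_ p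
  · intro s
    show extDer (fun s => betaF b hb E X s) (betaF_isDer_snd b hb E hE X) (epsF E D hD X) (C s)
      = E (C s)
    rw [extDer_C]
    exact betaF_X b hb E s
  · show extDer (fun s => betaF b hb E X s) (betaF_isDer_snd b hb E hE X) (epsF E D hD X) X
      = E X
    rw [extDer_X]
    exact epsF_X E D hD

end Aux

/-- Polynomial ring extension of biderivations (Corollary 2.14 of "Commutative
bidifferential algebra"): every biderivation on `R` extends to `R[X]`, and given
derivations `D : R → R[X]` and `E : R[X] → R[X]` there is a unique extension `b'` with
`b' (C r) X = D r` and `b' X p = E p`. -/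
theorem biderivation_polynomial_extension
    {R : Type*} [CommRing R] (b : R → R → R) (hb : IsBiderivO b) :
    (∃ b₀ : Polynomial R → Polynomial R → Polynomial R, IsBiderivO b₀ ∧
      ∀ r s : R, b₀ (Polynomial.C r) (Polynomial.C s) = Polynomial.C (b r s)) ∧
    (∀ (D : R → Polynomial R) (E : Polynomial R → Polynomial R),
      IsDerivationFun D → IsDerivationFun E →
      ∃! b' : Polynomial R → Polynomial R → Polynomial R,
        IsBiderivO b' ∧
        (∀ r s : R, b' (Polynomial.C r) (Polynomial.C s) = Polynomial.C (b r s)) ∧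
        (∀ r : R, b' (Polynomial.C r) Polynomial.X = D r) ∧
        (∀ p : Polynomial R, b' Polynomial.X p = E p)) := by
  classical
  open Polynomial in
  have main : ∀ (D : R → Polynomial R) (E : Polynomial R → Polynomial R),
      IsDerivationFun D → IsDerivationFun E →
      ∃! b' : Polynomial R → Polynomial R → Polynomial R,
        IsBiderivO b' ∧
        (∀ r s : R, b' (C r) (C s) = C (b r s)) ∧
        (∀ r : R, b' (C r) X = D r) ∧
        (∀ p : Polynomial R, b' X p = E p) := by
    intro D E hD hE
    refine ⟨bidF b hb E hE D hD,
      ⟨bidF_isBider b hb E hE D hD, bidF_CC b hb E hE D hD, bidF_CX b hb E hE D hD,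
        bidF_X b hb E hE D hD⟩, ?_⟩
    rintro b'' ⟨hbd, hCC, hCX, hX⟩
    have hb'bider := bidF_isBider b hb E hE D hD
    have hb'CC := bidF_CC b hb E hE D hD
    have hb'CX := bidF_CX b hb E hE D hD
    have hb'X := bidF_X b hb E hE D hD
    funext p q
    have hconst : ∀ (s : R) (p : Polynomial R), b'' p (C s) = bidF b hb E hE D hD p (C s) := by
      intro s p
      refine der_unique (fun p => b'' p (C s)) (fun p => bidF b hb E hE D hD p (C s))
        (hbd.2 (C s)) (hb'bider.2 (C s)) ?_ ?_ p
      · intro r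
        show b'' (C r) (C s) = bidF b hb E hE D hD (C r) (C s)
        rw [hCC, hb'CC]
      · show b'' X (C s) = bidF b hb E hE D hD X (C s)
        rw [hX, hb'X]
    have hXagree : ∀ p : Polynomial R, b'' p X = bidF b hb E hE D hD p X := by
      intro p
      refine der_unique (fun p => b'' p X) (fun p => bidF b hb E hE D hD p X)
        (hbd.2 X) (hb'bider.2 X) ?_ ?_ p
      · intro r
        show b'' (C r) X = bidF b hb E hE D hD (C r) X
        rw [hCX, hb'CX]
      · show b'' X X = bidF b hb E hE D hD X X
        rw [hX, hb'X]
    exact der_unique (b'' p) (bidF b hb E hE D hD p) (hbd.1 p) (hb'bider.1 p)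
      (fun s => hconst s p) (hXagree p) q
  refine ⟨?_, main⟩
  have h0 : IsDerivationFun (fun _ : R => (0 : Polynomial R)) := by
    constructor <;> intro x y <;> simp
  have h0' : IsDerivationFun (fun _ : Polynomial R => (0 : Polynomial R)) := by
    constructor <;> intro x y <;> simp
  obtain ⟨b₀, ⟨hbd, hCC, -, -⟩, -⟩ := main _ _ h0 h0'
  exact ⟨b₀, hbd, hCC⟩
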